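/- Let A be a smooth real vector bundle of finite rank over a smooth manifold M and let B be a smooth real vector bundle of finite rank over a smooth manifold N. Let f : M → N be a smooth map and let Φ be a morphism of vector bundles from A to B over f, i.e. a smooth map between the total spaces satisfying π_B ∘ Φ = f ∘ π_A whose restriction to each fiber A_m is an ℝ-linear map A_m → B_{f(m)}. Then Φ is a surjective submersion (i.e. Φ is surjective and its differential mfderiv at every point of the total space of A is surjective) if and only if f is a surjective submersion and for every m ∈ M the restriction Φ|_{A_m} : A_m → B_{f(m)} is a surjective linear map. -/

import Mathlib

/-!
In the charts of the total spaces given by local trivializations, the local representative of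
`Φ` near a point over `m` has the form `(x, u) ↦ (f̂ x, K x u)`, where `f̂` is the local
representative of `f` and every `K x` is linear, `K` at the base point being `φ m` read in the
trivializations. Hence `dΦ` is block triangular with diagonal blocks `df_m` and `φ m`, and block
diagonal along the zero section. A block triangular map with surjective diagonal blocks is
surjective, and a block diagonal one is surjective exactly when both blocks are.
-/

open Bundle Function Filter Topology
open scoped Manifold

namespace LinearMap

variable {R E F G H : Type*} [Semiring R] [AddCommGroup E] [Module R E] [AddCommGroup F]
  [Module R F] [AddCommGroup G] [Module R G] [AddCommGroup H] [Module R H]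
  {T : E × F →ₗ[R] G × H} {D : E → G} {L : F → H}

theorem apply_mk_eq_add_of_apply_inr (h₂ : ∀ u, T (0, u) = (0, L u)) (x : E) (u : F) :
    T (x, u) = T (x, 0) + (0, L u) := by
  rw [← h₂, ← map_add, Prod.mk_add_mk, add_zero, zero_add]

theorem surjective_of_blockTriangular (h₁ : ∀ w, (T w).1 = D w.1)
    (h₂ : ∀ u, T (0, u) = (0, L u)) (hD : Surjective D) (hL : Surjective L) : Surjective T := by
  rintro ⟨y, v⟩
  obtain ⟨x, rfl⟩ := hD y
  obtain ⟨u, hu⟩ := hL (v - (T (x, 0)).2)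
  refine ⟨(x, u), ?_⟩
  ext
  · rw [h₁]
  · rw [apply_mk_eq_add_of_apply_inr h₂, Prod.snd_add, hu, add_sub_cancel]

theorem surjective_iff_of_blockDiagonal (h₁ : ∀ w, (T w).1 = D w.1)
    (h₂ : ∀ u, T (0, u) = (0, L u)) (h₃ : ∀ x, (T (x, 0)).2 = 0) :
    Surjective T ↔ Surjective D ∧ Surjective L := by
  refine ⟨fun hT => ⟨fun y => ?_, fun v => ?_⟩,
    fun h => surjective_of_blockTriangular h₁ h₂ h.1 h.2⟩
  · obtain ⟨w, hw⟩ := hT (y, 0)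
    exact ⟨w.1, by rw [← h₁, hw]⟩
  · obtain ⟨⟨x, u⟩, hw⟩ := hT (0, v)
    refine ⟨u, ?_⟩
    simpa [h₃] using congrArg Prod.snd ((apply_mk_eq_add_of_apply_inr h₂ x u).symm.trans hw)

end LinearMap

section FiberwiseLinear

variable {𝕜 E F G H : Type*} [NontriviallyNormedField 𝕜] [NormedAddCommGroup E]
  [NormedSpace 𝕜 E] [NormedAddCommGroup F] [NormedSpace 𝕜 F] [NormedAddCommGroup G]
  [NormedSpace 𝕜 G] [NormedAddCommGroup H] [NormedSpace 𝕜 H]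
  {Ψ : E × F → G × H} {g : E → G} {K : E → F →ₗ[𝕜] H} {T : E × F →L[𝕜] G × H}
  {D : E →L[𝕜] G} {x₀ : E} {u₀ : F}

theorem HasFDerivAt.fst_apply_of_fiberwiseLinear
    (hΨ : ∀ᶠ x in 𝓝 x₀, ∀ u, Ψ (x, u) = (g x, K x u))
    (hT : HasFDerivAt Ψ T (x₀, u₀)) (hg : HasFDerivAt g D x₀) (w : E × F) :
    (T w).1 = D w.1 := by
  have hfst : (fun z => (Ψ z).1) =ᶠ[𝓝 (x₀, u₀)] g ∘ Prod.fst :=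
    (hΨ.prod_inl_nhds u₀).mono fun z hz => by simpa using congrArg Prod.fst (hz z.2)
  have h := ((hg.comp (x₀, u₀) hasFDerivAt_fst).congr_of_eventuallyEq hfst).unique hT.fst
  exact (DFunLike.congr_fun h w).symm

theorem HasFDerivAt.apply_inr_of_fiberwiseLinear
    (hΨ : ∀ᶠ x in 𝓝 x₀, ∀ u, Ψ (x, u) = (g x, K x u))
    (hT : HasFDerivAt Ψ T (x₀, u₀)) (u : F) : T (0, u) = (0, K x₀ u) := by
  have hline : HasDerivAt (fun t : 𝕜 => ((x₀, u₀ + t • u) : E × F)) (0, u) 0 := by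
    simpa using (hasDerivAt_const (0 : 𝕜) x₀).prodMk
      (((hasDerivAt_id (0 : 𝕜)).smul_const u).const_add u₀)
  have hT' : HasFDerivAt Ψ T (x₀, u₀ + (0 : 𝕜) • u) := by rwa [zero_smul, add_zero]
  have h₁ : HasDerivAt (fun t : 𝕜 => Ψ (x₀, u₀ + t • u)) (T (0, u)) 0 :=
    hT'.comp_hasDerivAt 0 hline
  have hrestrict : (fun t : 𝕜 => Ψ (x₀, u₀ + t • u)) =
      fun t => (g x₀, K x₀ u₀ + t • K x₀ u) := by
    funext t
    rw [hΨ.self_of_nhds, map_add, map_smul]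
  have h₂ : HasDerivAt (fun t : 𝕜 => (g x₀, K x₀ u₀ + t • K x₀ u)) (0, K x₀ u) 0 := by
    simpa using (hasDerivAt_const (0 : 𝕜) (g x₀)).prodMk
      (((hasDerivAt_id (0 : 𝕜)).smul_const (K x₀ u)).const_add (K x₀ u₀))
  exact h₁.unique (hrestrict ▸ h₂)

theorem HasFDerivAt.snd_apply_inl_of_fiberwiseLinear
    (hΨ : ∀ᶠ x in 𝓝 x₀, ∀ u, Ψ (x, u) = (g x, K x u)) (hT : HasFDerivAt Ψ T (x₀, 0)) (x : E) :
    (T (x, 0)).2 = 0 := by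
  have hzero : (fun y => (Ψ (y, 0)).2) =ᶠ[𝓝 x₀] fun _ => (0 : H) :=
    hΨ.mono fun y hy => by simp [hy]
  have hslice : HasFDerivAt (fun y => Ψ (y, 0)) (T.comp (.inl 𝕜 E F)) x₀ :=
    hT.comp x₀ (hasFDerivAt_prodMk_left x₀ (0 : F))
  have h := (hslice.snd.congr_of_eventuallyEq hzero.symm).unique (hasFDerivAt_const 0 x₀)
  simpa using DFunLike.congr_fun h x

end FiberwiseLinear

theorem MDifferentiableAt.hasFDerivAt_writtenInExtChartAt {𝕜 E H M E' H' M' : Type*}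
    [NontriviallyNormedField 𝕜] [NormedAddCommGroup E] [NormedSpace 𝕜 E] [TopologicalSpace H]
    {I : ModelWithCorners 𝕜 E H} [I.Boundaryless] [TopologicalSpace M] [ChartedSpace H M]
    [NormedAddCommGroup E'] [NormedSpace 𝕜 E'] [TopologicalSpace H']
    {I' : ModelWithCorners 𝕜 E' H'} [TopologicalSpace M'] [ChartedSpace H' M'] {g : M → M'}
    {x : M} (h : MDifferentiableAt I I' g x) :
    HasFDerivAt (writtenInExtChartAt I I' x g) (mfderiv I I' g x) (extChartAt I x x) := by
  have h' := h.hasMFDerivAt.2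
  rw [I.range_eq_univ] at h'
  exact hasFDerivWithinAt_univ.mp h'

theorem FiberBundle.extChartAt_self {𝕜 B F HB EB : Type*} {E : B → Type*}
    [NontriviallyNormedField 𝕜] [NormedAddCommGroup F] [NormedSpace 𝕜 F] [NormedAddCommGroup EB]
    [NormedSpace 𝕜 EB] [TopologicalSpace HB] {IB : ModelWithCorners 𝕜 EB HB} [TopologicalSpace B]
    [ChartedSpace HB B] [∀ x, TopologicalSpace (E x)] [TopologicalSpace (TotalSpace F E)]
    [FiberBundle F E] (a : TotalSpace F E) :
    extChartAt (IB.prod 𝓘(𝕜, F)) a a =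
      (extChartAt IB a.proj a.proj, (trivializationAt F E a.proj a).2) := by
  rw [FiberBundle.extChartAt, PartialEquiv.coe_trans, comp_apply, PartialEquiv.prod_coe]
  simp only [PartialEquiv.refl_coe, id, OpenPartialHomeomorph.coe_toPartialEquiv,
    Trivialization.coe_coe, Trivialization.coe_fst' _ (mem_baseSet_trivializationAt F E a.proj)]

section

variable {M N FA FB : Type*} {A : M → Type*} {B : N → Type*} [∀ m, AddCommGroup (A m)]
  [∀ m, Module ℝ (A m)] [∀ n, AddCommGroup (B n)] [∀ n, Module ℝ (B n)]
  {f : M → N} (φ : ∀ m, A m →ₗ[ℝ] B (f m))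

variable (FA FB) in
def totalSpaceMap : TotalSpace FA A → TotalSpace FB B := fun a => ⟨f a.proj, φ a.proj a.2⟩

theorem surjective_of_surjective_totalSpaceMap (h : Surjective (totalSpaceMap FA FB φ)) :
    Surjective f := fun n =>
  let ⟨a, ha⟩ := h ⟨n, 0⟩
  ⟨a.proj, congrArg TotalSpace.proj ha⟩

theorem surjective_totalSpaceMap (hf : Surjective f) (hφ : ∀ m, Surjective (φ m)) :
    Surjective (totalSpaceMap FA FB φ) := by
  rintro ⟨n, w⟩
  obtain ⟨m, rfl⟩ := hf n
  obtain ⟨v, rfl⟩ := hφ m w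
  exact ⟨⟨m, v⟩, rfl⟩

variable [TopologicalSpace M] [TopologicalSpace N]
  [NormedAddCommGroup FA] [NormedSpace ℝ FA] [∀ m, TopologicalSpace (A m)]
  [TopologicalSpace (TotalSpace FA A)] [FiberBundle FA A] [VectorBundle ℝ FA A]
  [NormedAddCommGroup FB] [NormedSpace ℝ FB] [∀ n, TopologicalSpace (B n)]
  [TopologicalSpace (TotalSpace FB B)] [FiberBundle FB B] [VectorBundle ℝ FB B]

variable (FA FB) in
/-- The analogue of `ContinuousLinearMap.inCoordinates` for fiberwise maps that are only linear. -/
noncomputable def linearInCoordinates (m₀ m : M) : FA →ₗ[ℝ] FB :=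
  (trivializationAt FB B (f m₀)).linearMapAt ℝ (f m) ∘ₗ φ m ∘ₗ
    (trivializationAt FA A m₀).symmₗ ℝ m

theorem surjective_linearInCoordinates_self_iff (m : M) :
    Surjective (linearInCoordinates FA FB φ m m) ↔ Surjective (φ m) := by
  have hA := mem_baseSet_trivializationAt FA A m
  have hB := mem_baseSet_trivializationAt FB B (f m)
  have h : ⇑(linearInCoordinates FA FB φ m m) =
      (trivializationAt FB B (f m)).linearEquivAt ℝ (f m) hB ∘ φ m ∘
        ((trivializationAt FA A m).linearEquivAt ℝ m hA).symm := by
    ext u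
    simp [linearInCoordinates, hA, hB]
  rw [h, EquivLike.comp_surjective, EquivLike.surjective_comp]

variable {EM HM EN HN : Type*} [NormedAddCommGroup EM] [NormedSpace ℝ EM] [TopologicalSpace HM]
  {IM : ModelWithCorners ℝ EM HM} [ChartedSpace HM M]
  [NormedAddCommGroup EN] [NormedSpace ℝ EN] [TopologicalSpace HN]
  {JN : ModelWithCorners ℝ EN HN} [ChartedSpace HN N]

variable (IM JN FB) in
theorem eventually_writtenInExtChartAt_totalSpaceMap (a : TotalSpace FA A)
    (hf : ContinuousAt f a.proj) :
    ∀ᶠ x in 𝓝 (extChartAt IM a.proj a.proj), ∀ u : FA,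
      writtenInExtChartAt (IM.prod 𝓘(ℝ, FA)) (JN.prod 𝓘(ℝ, FB)) a (totalSpaceMap FA FB φ)
        (x, u) =
        (writtenInExtChartAt IM JN a.proj f x,
          linearInCoordinates FA FB φ a.proj ((extChartAt IM a.proj).symm x) u) := by
  have hbase : (trivializationAt FA A a.proj).baseSet ∩
      f ⁻¹' (trivializationAt FB B (f a.proj)).baseSet ∈
        𝓝 ((extChartAt IM a.proj).symm (extChartAt IM a.proj a.proj)) := by
    rw [extChartAt_to_inv]
    exact inter_mem ((trivializationAt FA A a.proj).open_baseSet.mem_nhds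
        (mem_baseSet_trivializationAt FA A a.proj))
      (hf.preimage_mem_nhds ((trivializationAt FB B (f a.proj)).open_baseSet.mem_nhds
        (mem_baseSet_trivializationAt FB B (f a.proj))))
  filter_upwards [(continuousAt_extChartAt_symm a.proj).preimage_mem_nhds hbase]
    with x ⟨hxA, hxB⟩ u
  have hsymm : (trivializationAt FA A a.proj).toPartialEquiv.symm
      ((extChartAt IM a.proj).symm x, u) =
        ⟨(extChartAt IM a.proj).symm x, (trivializationAt FA A a.proj).symm _ u⟩ :=
    ((trivializationAt FA A a.proj).mk_symm hxA u).symm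
  simp only [writtenInExtChartAt, comp_apply]
  rw [FiberBundle.extChartAt, FiberBundle.extChartAt]
  simp only [PartialEquiv.trans_symm_eq_symm_trans_symm, PartialEquiv.coe_trans,
    PartialEquiv.prod_symm, comp_apply, PartialEquiv.prod_coe, PartialEquiv.refl_symm,
    PartialEquiv.refl_coe, id, hsymm]
  simp only [totalSpaceMap, linearInCoordinates, LinearMap.comp_apply,
    Trivialization.symmₗ_apply _ hxA, OpenPartialHomeomorph.coe_toPartialEquiv,
    Trivialization.coe_coe, Trivialization.coe_linearMapAt_of_mem _ hxB,
    Trivialization.coe_coe_fst _ hxB]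

variable [IM.Boundaryless]

theorem surjective_mfderiv_totalSpaceMap {a : TotalSpace FA A}
    (hf : MDifferentiableAt IM JN f a.proj)
    (hΦ : MDifferentiableAt (IM.prod 𝓘(ℝ, FA)) (JN.prod 𝓘(ℝ, FB)) (totalSpaceMap FA FB φ) a)
    (hD : Surjective (mfderiv IM JN f a.proj)) (hφ : Surjective (φ a.proj)) :
    Surjective (mfderiv (IM.prod 𝓘(ℝ, FA)) (JN.prod 𝓘(ℝ, FB)) (totalSpaceMap FA FB φ) a) := by
  have hchart := eventually_writtenInExtChartAt_totalSpaceMap FB φ IM JN a hf.continuousAt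
  have hT := hΦ.hasFDerivAt_writtenInExtChartAt
  rw [FiberBundle.extChartAt_self] at hT
  have hg := hf.hasFDerivAt_writtenInExtChartAt
  refine LinearMap.surjective_of_blockTriangular (hT.fst_apply_of_fiberwiseLinear hchart hg)
    (hT.apply_inr_of_fiberwiseLinear hchart) hD ?_
  rwa [extChartAt_to_inv, surjective_linearInCoordinates_self_iff]

theorem surjective_mfderiv_totalSpaceMap_zero_iff {m : M} (hf : MDifferentiableAt IM JN f m)
    (hΦ : MDifferentiableAt (IM.prod 𝓘(ℝ, FA)) (JN.prod 𝓘(ℝ, FB)) (totalSpaceMap FA FB φ)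
      ⟨m, 0⟩) :
    Surjective (mfderiv (IM.prod 𝓘(ℝ, FA)) (JN.prod 𝓘(ℝ, FB)) (totalSpaceMap FA FB φ) ⟨m, 0⟩) ↔
      Surjective (mfderiv IM JN f m) ∧ Surjective (φ m) := by
  have hchart := eventually_writtenInExtChartAt_totalSpaceMap FB φ IM JN
    (⟨m, 0⟩ : TotalSpace FA A) hf.continuousAt
  have hT := hΦ.hasFDerivAt_writtenInExtChartAt
  have hzero : (trivializationAt FA A m ⟨m, 0⟩).2 = 0 :=
    map_zero ((trivializationAt FA A m).linearEquivAt ℝ m (mem_baseSet_trivializationAt FA A m))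
  rw [FiberBundle.extChartAt_self, hzero] at hT
  have hg := hf.hasFDerivAt_writtenInExtChartAt
  refine (LinearMap.surjective_iff_of_blockDiagonal (hT.fst_apply_of_fiberwiseLinear hchart hg)
    (hT.apply_inr_of_fiberwiseLinear hchart) (hT.snd_apply_inl_of_fiberwiseLinear hchart)).trans
    (and_congr_right' ?_)
  rw [extChartAt_to_inv, surjective_linearInCoordinates_self_iff]

end

theorem vectorBundleMorphism_surjectiveSubmersion_iff_general
    -- the base manifold `M`
    {EM : Type*} [NormedAddCommGroup EM] [NormedSpace ℝ EM]
    {HM : Type*} [TopologicalSpace HM] (IM : ModelWithCorners ℝ EM HM) [IM.Boundaryless]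
    {M : Type*} [TopologicalSpace M] [ChartedSpace HM M]
    -- the base manifold `N`
    {EN : Type*} [NormedAddCommGroup EN] [NormedSpace ℝ EN]
    {HN : Type*} [TopologicalSpace HN] (JN : ModelWithCorners ℝ EN HN)
    {N : Type*} [TopologicalSpace N] [ChartedSpace HN N]
    -- the smooth vector bundle `A` over `M`
    (FA : Type*) [NormedAddCommGroup FA] [NormedSpace ℝ FA]
    (A : M → Type*) [∀ x, AddCommGroup (A x)] [∀ x, Module ℝ (A x)]
    [∀ x, TopologicalSpace (A x)]
    [TopologicalSpace (TotalSpace FA A)] [FiberBundle FA A] [VectorBundle ℝ FA A]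
    -- the smooth vector bundle `B` over `N`
    (FB : Type*) [NormedAddCommGroup FB] [NormedSpace ℝ FB]
    (B : N → Type*) [∀ x, AddCommGroup (B x)] [∀ x, Module ℝ (B x)]
    [∀ x, TopologicalSpace (B x)]
    [TopologicalSpace (TotalSpace FB B)] [FiberBundle FB B] [VectorBundle ℝ FB B]
    -- the smooth map `f : M → N`
    (f : M → N) (hf : ContMDiff IM JN (⊤ : ℕ∞) f)
    -- the morphism `Φ` of vector bundles over `f`, fiberwise given by `φ`
    (φ : ∀ m, A m →ₗ[ℝ] B (f m))
    (Φ : TotalSpace FA A → TotalSpace FB B)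
    (hΦdef : ∀ a : TotalSpace FA A, Φ a = ⟨f a.proj, φ a.proj a.2⟩)
    (hΦ : ContMDiff (IM.prod 𝓘(ℝ, FA)) (JN.prod 𝓘(ℝ, FB)) (⊤ : ℕ∞) Φ) :
    (Surjective Φ ∧ ∀ a : TotalSpace FA A,
        Surjective (mfderiv (IM.prod 𝓘(ℝ, FA)) (JN.prod 𝓘(ℝ, FB)) Φ a)) ↔
      ((Surjective f ∧ ∀ m : M, Surjective (mfderiv IM JN f m)) ∧
        ∀ m : M, Surjective (φ m)) := by
  obtain rfl : Φ = totalSpaceMap FA FB φ := funext hΦdef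
  have hfd : ∀ m, MDifferentiableAt IM JN f m := fun m => (hf m).mdifferentiableAt (by simp)
  have hΦd : ∀ a, MDifferentiableAt (IM.prod 𝓘(ℝ, FA)) (JN.prod 𝓘(ℝ, FB))
      (totalSpaceMap FA FB φ) a := fun a => (hΦ a).mdifferentiableAt (by simp)
  constructor
  · rintro ⟨hsurj, hmfderiv⟩
    have hzero m :=
      (surjective_mfderiv_totalSpaceMap_zero_iff φ (hfd m) (hΦd _)).1 (hmfderiv ⟨m, 0⟩)
    exact ⟨⟨surjective_of_surjective_totalSpaceMap φ hsurj, fun m => (hzero m).1⟩,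
      fun m => (hzero m).2⟩
  · rintro ⟨⟨hsurj, hmfderiv⟩, hφ⟩
    exact ⟨surjective_totalSpaceMap φ hsurj hφ, fun a =>
      surjective_mfderiv_totalSpaceMap φ (hfd _) (hΦd a) (hmfderiv _) (hφ _)⟩

/-- A vector bundle morphism `Φ` from `A → M` to `B → N` over a smooth map
`f : M → N` (given fiberwise by the linear maps `φ m : A m →ₗ[ℝ] B (f m)`) is a surjective
submersion if and only if `f` is a surjective submersion and every fiberwise map `φ m` is
surjective. -/
theorem vectorBundleMorphism_surjectiveSubmersion_iff
    -- the base manifold `M`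
    {EM : Type*} [NormedAddCommGroup EM] [NormedSpace ℝ EM] [FiniteDimensional ℝ EM]
    {HM : Type*} [TopologicalSpace HM] (IM : ModelWithCorners ℝ EM HM) [IM.Boundaryless]
    {M : Type*} [TopologicalSpace M] [ChartedSpace HM M] [IsManifold IM (⊤ : ℕ∞) M]
    -- the base manifold `N`
    {EN : Type*} [NormedAddCommGroup EN] [NormedSpace ℝ EN] [FiniteDimensional ℝ EN]
    {HN : Type*} [TopologicalSpace HN] (JN : ModelWithCorners ℝ EN HN) [JN.Boundaryless]
    {N : Type*} [TopologicalSpace N] [ChartedSpace HN N] [IsManifold JN (⊤ : ℕ∞) N]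
    -- the smooth vector bundle `A` over `M`
    (FA : Type*) [NormedAddCommGroup FA] [NormedSpace ℝ FA] [FiniteDimensional ℝ FA]
    (A : M → Type*) [∀ x, AddCommGroup (A x)] [∀ x, Module ℝ (A x)]
    [∀ x, TopologicalSpace (A x)]
    [TopologicalSpace (TotalSpace FA A)] [FiberBundle FA A] [VectorBundle ℝ FA A]
    [ContMDiffVectorBundle (⊤ : ℕ∞) FA A IM]
    -- the smooth vector bundle `B` over `N`
    (FB : Type*) [NormedAddCommGroup FB] [NormedSpace ℝ FB] [FiniteDimensional ℝ FB]
    (B : N → Type*) [∀ x, AddCommGroup (B x)] [∀ x, Module ℝ (B x)]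
    [∀ x, TopologicalSpace (B x)]
    [TopologicalSpace (TotalSpace FB B)] [FiberBundle FB B] [VectorBundle ℝ FB B]
    [ContMDiffVectorBundle (⊤ : ℕ∞) FB B JN]
    -- the smooth map `f : M → N`
    (f : M → N) (hf : ContMDiff IM JN (⊤ : ℕ∞) f)
    -- the morphism `Φ` of vector bundles over `f`, fiberwise given by `φ`
    (φ : ∀ m, A m →ₗ[ℝ] B (f m))
    (Φ : TotalSpace FA A → TotalSpace FB B)
    (hΦdef : ∀ a : TotalSpace FA A, Φ a = ⟨f a.proj, φ a.proj a.2⟩)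
    (hΦ : ContMDiff (IM.prod 𝓘(ℝ, FA)) (JN.prod 𝓘(ℝ, FB)) (⊤ : ℕ∞) Φ) :
    (Surjective Φ ∧ ∀ a : TotalSpace FA A,
        Surjective (mfderiv (IM.prod 𝓘(ℝ, FA)) (JN.prod 𝓘(ℝ, FB)) Φ a)) ↔
      ((Surjective f ∧ ∀ m : M, Surjective (mfderiv IM JN f m)) ∧
        ∀ m : M, Surjective (φ m)) :=
  vectorBundleMorphism_surjectiveSubmersion_iff_general IM JN FA A FB B f hf φ Φ hΦdef hΦ
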